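/- Let w(j) := α^{L_j − ν₀(j)} β^{ν₀(j)}, where L_j = ⌊log₂ j⌋ and ν₀(j) is the number of 0s in the binary expansion of j. (a) If β ≥ α > 0 and β ≥ 1, then β·w(n + 2^j) ≥ α·w(n) for all n ≥ 1 and j ≥ 0. (b) If α ≥ β > 0 and β ≤ 1, then β·w(n + 2^j) ≤ α·w(n) for all n ≥ 1 and j ≥ 0. -/

import Mathlib

/-!
Write `s(n)` for the binary digit sum of `n`, so that `ν₀(n) + s(n) = L_n + 1`. The binary digit
sum is subadditive, hence `s(n + 2^j) ≤ s(n) + 1`, i.e. `1 + ν₀(n + 2^j) - ν₀(n) ≥ L_{n+2^j} - L_n`.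
In both parts the two sides are then of the form `α^a β^b` and `α^c β^d` with `c ≤ a` and
`a + b ≤ c + d`: one side is obtained from the other by trading factors `α` for factors `β` and
appending further factors `β`.
-/

/-- `ν₀(j)`, the number of 0s in the binary expansion of `j` (with `ν₀(0) = 0`). -/
def nuZero (j : ℕ) : ℕ := (Nat.digits 2 j).count 0

/-- `w(j) = α^{L_j − ν₀(j)} β^{ν₀(j)}`, where `L_j = ⌊log₂ j⌋`. -/
def w (α β : ℝ) (j : ℕ) : ℝ := α ^ (Nat.log 2 j - nuZero j) * β ^ nuZero j

-- Legendre: `(p - 1) v_p(k!) = k - s_p(k)`; and `m! n!` divides `(m + n)!`.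
theorem Nat.digits_sum_add_le (p : ℕ) [Fact p.Prime] (m n : ℕ) :
    (p.digits (m + n)).sum ≤ (p.digits m).sum + (p.digits n).sum := by
  have hv : padicValNat p (m + n).factorial =
      padicValNat p ((m + n).choose n) + padicValNat p m.factorial + padicValNat p n.factorial := by
    rw [← Nat.add_choose_mul_factorial_mul_factorial, padicValNat.mul, padicValNat.mul] <;>
      simp [Nat.factorial_ne_zero, Nat.choose_eq_zero_iff]
  have hmn := sub_one_mul_padicValNat_factorial (p := p) (m + n)
  have hm := sub_one_mul_padicValNat_factorial (p := p) m
  have hn := sub_one_mul_padicValNat_factorial (p := p) n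
  rw [hv, mul_add, mul_add] at hmn
  have := Nat.digit_sum_le p m
  have := Nat.digit_sum_le p n
  have := Nat.digit_sum_le p (m + n)
  omega

theorem Nat.digits_sum_two_pow (j : ℕ) : (Nat.digits 2 (2 ^ j)).sum = 1 := by
  rw [← mul_one (2 ^ j), Nat.digits_base_pow_mul one_lt_two one_pos]
  simp

theorem Nat.digits_sum_add_two_pow_le (n j : ℕ) :
    (Nat.digits 2 (n + 2 ^ j)).sum ≤ (Nat.digits 2 n).sum + 1 :=
  (Nat.digits_sum_add_le 2 n (2 ^ j)).trans_eq (by rw [Nat.digits_sum_two_pow])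

theorem Nat.digits_sum_pos {b n : ℕ} (hn : n ≠ 0) : 0 < (b.digits n).sum :=
  List.sum_pos_iff_exists_pos_nat.mpr
    ⟨_, List.getLast_mem _, Nat.pos_of_ne_zero (Nat.getLast_digit_ne_zero b hn)⟩

theorem List.count_zero_add_sum_of_lt_two {l : List ℕ} (h : ∀ x ∈ l, x < 2) :
    l.count 0 + l.sum = l.length := by
  induction l with
  | nil => rfl
  | cons a t ih =>
    rw [List.forall_mem_cons] at h
    have := ih h.2
    obtain rfl | rfl : a = 0 ∨ a = 1 := by omega
    all_goals grind

theorem nuZero_add_digits_sum {n : ℕ} (hn : n ≠ 0) :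
    nuZero n + (Nat.digits 2 n).sum = Nat.log 2 n + 1 := by
  rw [nuZero, List.count_zero_add_sum_of_lt_two fun _ ↦ Nat.digits_lt_base one_lt_two,
    Nat.length_digits 2 n one_lt_two hn]

theorem nuZero_le_log {n : ℕ} (hn : n ≠ 0) : nuZero n ≤ Nat.log 2 n := by
  have := nuZero_add_digits_sum hn
  have := Nat.digits_sum_pos (b := 2) hn
  omega

theorem nuZero_add_log_add_two_pow_le {n : ℕ} (hn : n ≠ 0) (j : ℕ) :
    nuZero n + Nat.log 2 (n + 2 ^ j) ≤ 1 + nuZero (n + 2 ^ j) + Nat.log 2 n := by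
  have := nuZero_add_digits_sum hn
  have := nuZero_add_digits_sum (n := n + 2 ^ j) (by positivity)
  have := Nat.digits_sum_add_two_pow_le n j
  omega

section PowMulPow

variable {R : Type*} [CommSemiring R] [PartialOrder R] [IsOrderedRing R] {α β : R} {a b c d : ℕ}

theorem pow_mul_pow_le_pow_mul_pow (hα : 0 ≤ α) (hαβ : α ≤ β) (hβ : 1 ≤ β)
    (hca : c ≤ a) (hd : a + b ≤ c + d) : α ^ a * β ^ b ≤ α ^ c * β ^ d := by
  obtain ⟨e, rfl⟩ := Nat.exists_eq_add_of_le hca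
  have hβ₀ : 0 ≤ β := hα.trans hαβ
  calc α ^ (c + e) * β ^ b = α ^ c * (α ^ e * β ^ b) := by ring
    _ ≤ α ^ c * (β ^ e * β ^ b) := by gcongr
    _ = α ^ c * β ^ (e + b) := by ring
    _ ≤ α ^ c * β ^ d := by gcongr; omega

theorem pow_mul_pow_le_pow_mul_pow_of_le_one (hβ : 0 ≤ β) (hβα : β ≤ α) (hβ₁ : β ≤ 1)
    (hca : c ≤ a) (hd : a + b ≤ c + d) : α ^ c * β ^ d ≤ α ^ a * β ^ b := by
  obtain ⟨e, rfl⟩ := Nat.exists_eq_add_of_le hca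
  have hα : 0 ≤ α := hβ.trans hβα
  calc α ^ c * β ^ d ≤ α ^ c * β ^ (e + b) :=
        mul_le_mul_of_nonneg_left (pow_le_pow_of_le_one hβ hβ₁ (by omega)) (pow_nonneg hα _)
    _ = α ^ c * (β ^ e * β ^ b) := by ring
    _ ≤ α ^ c * (α ^ e * β ^ b) := by gcongr
    _ = α ^ (c + e) * β ^ b := by ring

end PowMulPow

/-- (a) If `β ≥ α > 0` and `β ≥ 1`, then `β·w(n+2^j) ≥ α·w(n)` for all `n ≥ 1`, `j ≥ 0`.
(b) If `α ≥ β > 0` and `β ≤ 1`, then `β·w(n+2^j) ≤ α·w(n)` for all `n ≥ 1`, `j ≥ 0`. -/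
theorem w_claim (α β : ℝ) :
    ((0 < α ∧ α ≤ β ∧ 1 ≤ β) →
      ∀ n : ℕ, 1 ≤ n → ∀ j : ℕ, α * w α β n ≤ β * w α β (n + 2 ^ j)) ∧
    ((0 < β ∧ β ≤ α ∧ β ≤ 1) →
      ∀ n : ℕ, 1 ≤ n → ∀ j : ℕ, β * w α β (n + 2 ^ j) ≤ α * w α β n) := by
  have exponents : ∀ n : ℕ, 1 ≤ n → ∀ j : ℕ,
      Nat.log 2 (n + 2 ^ j) - nuZero (n + 2 ^ j) ≤ Nat.log 2 n - nuZero n + 1 ∧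
      Nat.log 2 n - nuZero n + 1 + nuZero n ≤
        Nat.log 2 (n + 2 ^ j) - nuZero (n + 2 ^ j) + (nuZero (n + 2 ^ j) + 1) := by
    intro n hn j
    have := nuZero_add_log_add_two_pow_le (n := n) (by omega) j
    have := nuZero_le_log (n := n) (by omega)
    have := nuZero_le_log (n := n + 2 ^ j) (by positivity)
    have := Nat.log_mono_right (b := 2) (Nat.le_add_right n (2 ^ j))
    omega
  have alpha_mul_w (n : ℕ) : α * w α β n = α ^ (Nat.log 2 n - nuZero n + 1) * β ^ nuZero n := by
    rw [w, pow_succ]; ring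
  have beta_mul_w (n : ℕ) :
      β * w α β n = α ^ (Nat.log 2 n - nuZero n) * β ^ (nuZero n + 1) := by
    rw [w, pow_succ]; ring
  refine ⟨fun ⟨hα, hαβ, hβ⟩ n hn j ↦ ?_, fun ⟨hβ, hβα, hβ₁⟩ n hn j ↦ ?_⟩ <;>
    obtain ⟨hca, hd⟩ := exponents n hn j <;> rw [alpha_mul_w, beta_mul_w]
  · exact pow_mul_pow_le_pow_mul_pow hα.le hαβ hβ hca hd
  · exact pow_mul_pow_le_pow_mul_pow_of_le_one hβ.le hβα hβ₁ hca hd
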